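/- arXiv:1612.05743 — 4 statements merged into one kernel-verified Lean document; each statement's English description precedes it below -/
import Mathlib

section
/- For p_s, |h|², |f|², σ² > 0 and C ∈ [0,1], the function R₁(p) = (1/2)·log₂(1 + (2·p_s·|h|²·(p·|f|² + σ²) + p_s²·|h|⁴) / ((1−C²)·p²·|f|⁴ + 2·p·|f|²·σ² + σ⁴)) is strictly decreasing in p on (0,∞). -/
/-- For `p_s, |h|², |f|², σ² > 0` and `C ∈ [0,1]`, the first-hop rate
`R₁(p) = (1/2)·log₂(1 + (2 p_s |h|² (p |f|² + σ²) + p_s² |h|⁴) /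
((1−C²) p² |f|⁴ + 2 p |f|² σ² + σ⁴))` is strictly decreasing in `p` on `(0,∞)`.
Here `h`, `f`, `σ` denote the squared gains `|h|²`, `|f|²` and the noise variance `σ²`. -/
theorem firstHopRate_strictAntiOn (ps h f σ C : ℝ)
    (hps : 0 < ps) (hh : 0 < h) (hf : 0 < f) (hσ : 0 < σ)
    (hC0 : 0 ≤ C) (hC1 : C ≤ 1) :
    StrictAntiOn (fun p : ℝ =>
      (1 / 2) * Real.logb 2 (1 +
        (2 * ps * h * (p * f + σ) + ps ^ 2 * h ^ 2) /
        ((1 - C ^ 2) * p ^ 2 * f ^ 2 + 2 * p * f * σ + σ ^ 2)))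
      (Set.Ioi 0) := by
  intro a ha b hb hab
  simp only [Set.mem_Ioi] at ha hb
  have hE : 0 ≤ 1 - C ^ 2 := by nlinarith
  have hDa : 0 < (1 - C ^ 2) * a ^ 2 * f ^ 2 + 2 * a * f * σ + σ ^ 2 := by positivity
  have hDb : 0 < (1 - C ^ 2) * b ^ 2 * f ^ 2 + 2 * b * f * σ + σ ^ 2 := by positivity
  have hNa : 0 < 2 * ps * h * (a * f + σ) + ps ^ 2 * h ^ 2 := by positivity
  have hNb : 0 < 2 * ps * h * (b * f + σ) + ps ^ 2 * h ^ 2 := by positivity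
  have hlt : (2 * ps * h * (b * f + σ) + ps ^ 2 * h ^ 2) /
      ((1 - C ^ 2) * b ^ 2 * f ^ 2 + 2 * b * f * σ + σ ^ 2) <
      (2 * ps * h * (a * f + σ) + ps ^ 2 * h ^ 2) /
      ((1 - C ^ 2) * a ^ 2 * f ^ 2 + 2 * a * f * σ + σ ^ 2) := by
    rw [div_lt_div_iff₀ hDb hDa]
    nlinarith [mul_pos hps hh, mul_pos (mul_pos hps hh) hf,
      mul_nonneg (mul_nonneg hE (mul_pos (mul_pos ha hb) (mul_pos (mul_pos hps hh) hf)).le)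
        (sub_pos.2 hab).le,
      mul_nonneg (mul_nonneg hE (mul_pos (mul_pos hps hh) (mul_pos hσ (pow_pos hf 2))).le)
        (mul_nonneg (add_pos ha hb).le (sub_pos.2 hab).le),
      mul_nonneg (mul_nonneg hE (mul_pos (mul_pos (pow_pos hps 2) (pow_pos hh 2))
        (pow_pos hf 2)).le) (mul_nonneg (add_pos ha hb).le (sub_pos.2 hab).le),
      mul_pos (mul_pos (mul_pos hps (pow_pos hh 2)) (mul_pos hf hσ)) (sub_pos.2 hab),
      mul_pos (mul_pos (mul_pos hps hh) (mul_pos hf (pow_pos hσ 2))) (sub_pos.2 hab)]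
  have h1b : 0 < 1 + (2 * ps * h * (b * f + σ) + ps ^ 2 * h ^ 2) /
      ((1 - C ^ 2) * b ^ 2 * f ^ 2 + 2 * b * f * σ + σ ^ 2) := by positivity
  simp only
  have hlog := Real.logb_lt_logb one_lt_two h1b (by linarith :
      1 + (2 * ps * h * (b * f + σ) + ps ^ 2 * h ^ 2) /
        ((1 - C ^ 2) * b ^ 2 * f ^ 2 + 2 * b * f * σ + σ ^ 2) <
      1 + (2 * ps * h * (a * f + σ) + ps ^ 2 * h ^ 2) /
        ((1 - C ^ 2) * a ^ 2 * f ^ 2 + 2 * a * f * σ + σ ^ 2))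
  linarith
end

section
/- The stationary-point condition (|g_j|²/σ²)·(σ² + p|f|²)² = p_s|h_i|²·(|f|² − |g_j|²) in the unknown p > 0 has a solution if and only if |f|² − |g_j|² > σ²|g_j|²/(p_s|h_i|²), in which case the unique positive solution is p = √( (σ²·p_s·|h_i|²/(|g_j|²·|f|⁴))·(|f|² − |g_j|²) ) − σ²/|f|². -/
/-- The stationary-point condition `(|g_j|²/σ²)(σ² + p|f|²)² = p_s|h_i|²(|f|² − |g_j|²)`
in the unknown `p > 0` has a solution iff `|f|² − |g_j|² > σ²|g_j|²/(p_s|h_i|²)`,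
in which case the unique positive solution is
`p = √((σ² p_s|h_i|²/(|g_j|²|f|⁴))(|f|² − |g_j|²)) − σ²/|f|²`.
Here `h`, `g`, `f`, `σ` denote `|h_i|²`, `|g_j|²`, `|f|²`, `σ²`. -/
theorem proper_stationary_point (ps h g f σ : ℝ)
    (hps : 0 < ps) (hh : 0 < h) (hg : 0 < g) (hf : 0 < f) (hσ : 0 < σ) :
    ((∃ p : ℝ, 0 < p ∧ (g / σ) * (σ + p * f) ^ 2 = ps * h * (f - g)) ↔
      f - g > σ * g / (ps * h)) ∧
    (f - g > σ * g / (ps * h) →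
      let p0 := Real.sqrt ((σ * ps * h / (g * f ^ 2)) * (f - g)) - σ / f
      0 < p0 ∧ (g / σ) * (σ + p0 * f) ^ 2 = ps * h * (f - g) ∧
      ∀ q : ℝ, 0 < q → (g / σ) * (σ + q * f) ^ 2 = ps * h * (f - g) → q = p0) := by
  have hph : 0 < ps * h := by positivity
  -- key construction under the condition
  have main : f - g > σ * g / (ps * h) →
      let p0 := Real.sqrt ((σ * ps * h / (g * f ^ 2)) * (f - g)) - σ / f
      0 < p0 ∧ (g / σ) * (σ + p0 * f) ^ 2 = ps * h * (f - g) ∧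
      ∀ q : ℝ, 0 < q → (g / σ) * (σ + q * f) ^ 2 = ps * h * (f - g) → q = p0 := by
    intro hcond
    intro p0
    have hcond' : σ * g < ps * h * (f - g) := by
      rw [gt_iff_lt, div_lt_iff₀ hph] at hcond
      linarith
    have hfg : 0 < f - g := by
      have : 0 < σ * g / (ps * h) := by positivity
      linarith
    set A := (σ * ps * h / (g * f ^ 2)) * (f - g) with hA
    have hApos : 0 < A := by positivity
    set s := Real.sqrt A with hs
    have hs2 : s ^ 2 = A := Real.sq_sqrt hApos.le
    have hspos : 0 < s := Real.sqrt_pos.mpr hApos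
    have hp0pos : 0 < p0 := by
      have hlt : σ / f < s := by
        rw [hs]
        refine (Real.lt_sqrt (by positivity)).mpr ?_
        rw [div_pow, hA, div_mul_eq_mul_div, div_lt_div_iff₀ (by positivity) (by positivity)]
        nlinarith [mul_lt_mul_of_pos_left hcond' (mul_pos hσ (pow_pos hf 2))]
      simpa [p0] using sub_pos.mpr hlt
    have hkey : σ + p0 * f = s * f := by
      have hc : (σ / f) * f = σ := div_mul_cancel₀ σ hf.ne'
      show σ + (s - σ / f) * f = s * f
      rw [sub_mul, hc]; ring
    have heq : (g / σ) * (σ + p0 * f) ^ 2 = ps * h * (f - g) := by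
      rw [hkey, mul_pow, hs2, hA]
      field_simp
    refine ⟨hp0pos, heq, ?_⟩
    intro q hq hqeq
    have hsq : (σ + q * f) ^ 2 = (σ + p0 * f) ^ 2 := by
      have hgσ : (g / σ) ≠ 0 := by positivity
      exact mul_left_cancel₀ hgσ (hqeq.trans heq.symm)
    have h1 : 0 < σ + q * f := by positivity
    have h2 : 0 < σ + p0 * f := by positivity
    have : σ + q * f = σ + p0 * f := by nlinarith [sq_nonneg ((σ + q*f) - (σ + p0*f))]
    have : q * f = p0 * f := by linarith
    exact mul_right_cancel₀ hf.ne' this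
  refine ⟨⟨?_, fun hc => ⟨_, (main hc).1, (main hc).2.1⟩⟩, main⟩
  rintro ⟨p, hp, heq⟩
  have h1 : σ * g < (g / σ) * (σ + p * f) ^ 2 := by
    rw [div_mul_eq_mul_div, lt_div_iff₀ hσ]
    nlinarith [mul_pos hg (mul_pos (mul_pos hσ hp) hf), mul_nonneg hg.le (sq_nonneg (p * f))]
  rw [gt_iff_lt, div_lt_iff₀ hph]
  nlinarith
end

section
/- Let f₁, f₂ be strictly decreasing and g₁, g₂ strictly increasing continuous functions on (0, M], with intersection points p₁ ≤ p₂ in (0, M] (f_i(p_i) = g_i(p_i)). Then the function R(p) = (1/2)·(min{f₁(p), g₁(p)} + min{f₂(p), g₂(p)}) is strictly increasing on (0, p₁], strictly decreasing on [p₂, M], and on [p₁, p₂] equals (1/2)(f₁(p) + g₂(p)) (after relabeling so that p₁ corresponds to path 1); hence its maximum over (0, M] is attained in [p₁, p₂], either at p₁, at p₂, or at a stationary point of f₁ + g₂ in (p₁, p₂). -/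
/-- Structure behind Theorem 1: with `f₁, f₂` strictly decreasing and `g₁, g₂` strictly
increasing continuous on `(0, M]`, intersection points `p₁ ≤ p₂` in `(0, M]`
(`fᵢ pᵢ = gᵢ pᵢ`, labeled so the smaller intersection belongs to path 1), the total rate
`R(p) = (1/2)(min{f₁ p, g₁ p} + min{f₂ p, g₂ p})` is strictly increasing on `(0, p₁]`,
strictly decreasing on `[p₂, M]`, equals `(1/2)(f₁ p + g₂ p)` on `[p₁, p₂]`, and its
maximum over `(0, M]` is attained at `p₁`, at `p₂`, or at a stationary point of
`f₁ + g₂` in `(p₁, p₂)`. -/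
theorem total_rate_structure (M p1 p2 : ℝ) (hM : 0 < M)
    (f1 f2 g1 g2 : ℝ → ℝ)
    (hf1c : ContinuousOn f1 (Set.Ioc 0 M)) (hf2c : ContinuousOn f2 (Set.Ioc 0 M))
    (hg1c : ContinuousOn g1 (Set.Ioc 0 M)) (hg2c : ContinuousOn g2 (Set.Ioc 0 M))
    (hf1 : StrictAntiOn f1 (Set.Ioc 0 M)) (hf2 : StrictAntiOn f2 (Set.Ioc 0 M))
    (hg1 : StrictMonoOn g1 (Set.Ioc 0 M)) (hg2 : StrictMonoOn g2 (Set.Ioc 0 M))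
    (hp1 : p1 ∈ Set.Ioc 0 M) (hp2 : p2 ∈ Set.Ioc 0 M) (hle : p1 ≤ p2)
    (hint1 : f1 p1 = g1 p1) (hint2 : f2 p2 = g2 p2)
    (hdf1 : DifferentiableOn ℝ f1 (Set.Ioo p1 p2))
    (hdg2 : DifferentiableOn ℝ g2 (Set.Ioo p1 p2)) :
    let R : ℝ → ℝ := fun p => (1 / 2) * (min (f1 p) (g1 p) + min (f2 p) (g2 p))
    StrictMonoOn R (Set.Ioc 0 p1) ∧
    StrictAntiOn R (Set.Icc p2 M) ∧
    (∀ p ∈ Set.Icc p1 p2, R p = (1 / 2) * (f1 p + g2 p)) ∧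
    ∃ pstar ∈ Set.Icc p1 p2,
      (∀ p ∈ Set.Ioc 0 M, R p ≤ R pstar) ∧
      (pstar = p1 ∨ pstar = p2 ∨
        (pstar ∈ Set.Ioo p1 p2 ∧ deriv (fun p => f1 p + g2 p) pstar = 0)) := by
  intro R
  obtain ⟨hp1a, hp1b⟩ := hp1
  obtain ⟨hp2a, hp2b⟩ := hp2
  have hmem1 : ∀ {p : ℝ}, p ∈ Set.Ioc 0 p1 → p ∈ Set.Ioc 0 M :=
    fun hp => ⟨hp.1, hp.2.trans hp1b⟩
  have hmem2 : ∀ {p : ℝ}, p ∈ Set.Icc p2 M → p ∈ Set.Ioc 0 M :=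
    fun hp => ⟨lt_of_lt_of_le hp2a hp.1, hp.2⟩
  have hmem3 : ∀ {p : ℝ}, p ∈ Set.Icc p1 p2 → p ∈ Set.Ioc 0 M :=
    fun hp => ⟨lt_of_lt_of_le hp1a hp.1, hp.2.trans hp2b⟩
  have hminA : ∀ p ∈ Set.Ioc 0 M, p ≤ p1 → min (f1 p) (g1 p) = g1 p := by
    intro p hp hpl
    refine min_eq_right ?_
    calc g1 p ≤ g1 p1 := hg1.monotoneOn hp ⟨hp1a, hp1b⟩ hpl
      _ = f1 p1 := hint1.symm
      _ ≤ f1 p := hf1.antitoneOn hp ⟨hp1a, hp1b⟩ hpl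
  have hminB : ∀ p ∈ Set.Ioc 0 M, p1 ≤ p → min (f1 p) (g1 p) = f1 p := by
    intro p hp hpl
    refine min_eq_left ?_
    calc f1 p ≤ f1 p1 := hf1.antitoneOn ⟨hp1a, hp1b⟩ hp hpl
      _ = g1 p1 := hint1
      _ ≤ g1 p := hg1.monotoneOn ⟨hp1a, hp1b⟩ hp hpl
  have hminC : ∀ p ∈ Set.Ioc 0 M, p ≤ p2 → min (f2 p) (g2 p) = g2 p := by
    intro p hp hpl
    refine min_eq_right ?_
    calc g2 p ≤ g2 p2 := hg2.monotoneOn hp ⟨hp2a, hp2b⟩ hpl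
      _ = f2 p2 := hint2.symm
      _ ≤ f2 p := hf2.antitoneOn hp ⟨hp2a, hp2b⟩ hpl
  have hminD : ∀ p ∈ Set.Ioc 0 M, p2 ≤ p → min (f2 p) (g2 p) = f2 p := by
    intro p hp hpl
    refine min_eq_left ?_
    calc f2 p ≤ f2 p2 := hf2.antitoneOn ⟨hp2a, hp2b⟩ hp hpl
      _ = g2 p2 := hint2
      _ ≤ g2 p := hg2.monotoneOn ⟨hp2a, hp2b⟩ hp hpl
  have hSM : StrictMonoOn R (Set.Ioc 0 p1) := by
    intro x hx y hy hxy
    have hx' := hmem1 hx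
    have hy' := hmem1 hy
    have h1 := hg1 hx' hy' hxy
    have h2 := hg2 hx' hy' hxy
    show (1/2) * (min (f1 x) (g1 x) + min (f2 x) (g2 x)) <
      (1/2) * (min (f1 y) (g1 y) + min (f2 y) (g2 y))
    rw [hminA x hx' hx.2, hminA y hy' hy.2, hminC x hx' (hx.2.trans hle),
      hminC y hy' (hy.2.trans hle)]
    linarith
  have hSA : StrictAntiOn R (Set.Icc p2 M) := by
    intro x hx y hy hxy
    have hx' := hmem2 hx
    have hy' := hmem2 hy
    have h1 := hf1 hx' hy' hxy
    have h2 := hf2 hx' hy' hxy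
    show (1/2) * (min (f1 y) (g1 y) + min (f2 y) (g2 y)) <
      (1/2) * (min (f1 x) (g1 x) + min (f2 x) (g2 x))
    rw [hminB x hx' (hle.trans hx.1), hminB y hy' (hle.trans hy.1),
      hminD x hx' hx.1, hminD y hy' hy.1]
    linarith
  have hEq : ∀ p ∈ Set.Icc p1 p2, R p = (1 / 2) * (f1 p + g2 p) := by
    intro p hp
    show (1/2) * (min (f1 p) (g1 p) + min (f2 p) (g2 p)) = (1/2) * (f1 p + g2 p)
    rw [hminB p (hmem3 hp) hp.1, hminC p (hmem3 hp) hp.2]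
  refine ⟨hSM, hSA, hEq, ?_⟩
  have hsub : Set.Icc p1 p2 ⊆ Set.Ioc 0 M := fun p hp => hmem3 hp
  set h : ℝ → ℝ := fun p => (1/2) * (f1 p + g2 p) with hh
  have hcont : ContinuousOn h (Set.Icc p1 p2) :=
    continuousOn_const.mul ((hf1c.mono hsub).add (hg2c.mono hsub))
  obtain ⟨pstar, hpstar, hmax⟩ :=
    isCompact_Icc.exists_isMaxOn (s := Set.Icc p1 p2) ⟨p1, le_refl p1, hle⟩ hcont
  refine ⟨pstar, hpstar, ?_, ?_⟩
  · intro p hp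
    have hRstar : R pstar = h pstar := hEq pstar hpstar
    rcases le_or_gt p p1 with hc1 | hc1
    · have hRp1 : R p1 ≤ R pstar := by
        rw [hRstar, hEq p1 ⟨le_refl p1, hle⟩]; exact hmax ⟨le_refl p1, hle⟩
      rcases eq_or_lt_of_le hc1 with rfl | hlt
      · exact hRp1
      · exact le_of_lt (lt_of_lt_of_le
          (hSM ⟨hp.1, le_of_lt hlt⟩ ⟨hp1a, le_refl p1⟩ hlt) hRp1)
    · rcases le_or_gt p p2 with hc2 | hc2
      · rw [hRstar, hEq p ⟨le_of_lt hc1, hc2⟩]; exact hmax ⟨le_of_lt hc1, hc2⟩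
      · have hRp2 : R p2 ≤ R pstar := by
          rw [hRstar, hEq p2 ⟨hle, le_refl p2⟩]; exact hmax ⟨hle, le_refl p2⟩
        exact le_of_lt (lt_of_lt_of_le
          (hSA ⟨le_refl p2, hp2b⟩ ⟨le_of_lt hc2, hp.2⟩ hc2) hRp2)
  · by_cases he1 : pstar = p1
    · exact Or.inl he1
    by_cases he2 : pstar = p2
    · exact Or.inr (Or.inl he2)
    have hIoo : pstar ∈ Set.Ioo p1 p2 :=
      ⟨lt_of_le_of_ne hpstar.1 (Ne.symm he1), lt_of_le_of_ne hpstar.2 he2⟩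
    refine Or.inr (Or.inr ⟨hIoo, ?_⟩)
    have hloc : IsLocalMax (fun p => f1 p + g2 p) pstar := by
      filter_upwards [isOpen_Ioo.mem_nhds hIoo] with q hq
      have h1 : h q ≤ h pstar := hmax (Set.Ioo_subset_Icc_self hq)
      simp only [hh] at h1
      linarith
    exact hloc.deriv_eq_zero
end

section
/- Define G(t) = (1/2)·log₂(1 + A/(B − D·t)) + (1/2)·log₂(E − F·t) for t ∈ [0,1], with A, D, F > 0, B − D > 0, E − F ≥ 1. Then G'(t) = 0 has at most one solution in (0,1), namely t* satisfying A·D·(E − F·t*) = F·(B − D·t*)·(A + B − D·t*); hence G has at most one interior stationary point on (0,1). -/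
/-- For `G(t) = (1/2)log₂(1 + A/(B − D t)) + (1/2)log₂(E − F t)` on `[0,1]` with
`A, D, F > 0`, `B − D > 0`, `E − F ≥ 1`: for `t ∈ (0,1)`, `G'(t) = 0` iff
`A·D·(E − F t) = F·(B − D t)·(A + B − D t)`, and `G` has at most one interior
stationary point on `(0,1)`. -/
theorem circularity_stationary_point (A B D E F : ℝ)
    (hA : 0 < A) (hD : 0 < D) (hF : 0 < F) (hBD : 0 < B - D) (hEF : 1 ≤ E - F) :
    let G : ℝ → ℝ := fun t =>
      (1 / 2) * Real.logb 2 (1 + A / (B - D * t)) + (1 / 2) * Real.logb 2 (E - F * t)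
    (∀ t ∈ Set.Ioo (0 : ℝ) 1,
      (deriv G t = 0 ↔ A * D * (E - F * t) = F * (B - D * t) * (A + B - D * t))) ∧
    Set.Subsingleton {t ∈ Set.Ioo (0 : ℝ) 1 | deriv G t = 0} := by
  intro G
  have hlog2 : 0 < Real.log 2 := Real.log_pos (by norm_num)
  have key : ∀ t ∈ Set.Ioo (0 : ℝ) 1,
      (deriv G t = 0 ↔ A * D * (E - F * t) = F * (B - D * t) * (A + B - D * t)) := by
    intro t ht
    obtain ⟨ht0, ht1⟩ := ht
    have hv : 0 < B - D * t := by nlinarith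
    have hw : 0 < A + B - D * t := by linarith
    have he : 0 < E - F * t := by nlinarith
    have hu1 : (0:ℝ) < 1 + A / (B - D * t) := by positivity
    have h1 : HasDerivAt (fun s : ℝ => B - D * s) (-D) t := by
      simpa using ((hasDerivAt_id t).const_mul D).const_sub B
    have h2 : HasDerivAt (fun s : ℝ => E - F * s) (-F) t := by
      simpa using ((hasDerivAt_id t).const_mul F).const_sub E
    have hu : HasDerivAt (fun s : ℝ => 1 + A / (B - D * s))
        (A * D / (B - D * t) ^ 2) t := by
      have := ((hasDerivAt_const t A).div h1 hv.ne').const_add 1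
      refine this.congr_deriv ?_
      ring
    have hlogu : HasDerivAt (fun s : ℝ => Real.log (1 + A / (B - D * s)))
        (A * D / (B - D * t) ^ 2 / (1 + A / (B - D * t))) t := hu.log hu1.ne'
    have hloge : HasDerivAt (fun s : ℝ => Real.log (E - F * s))
        (-F / (E - F * t)) t := h2.log he.ne'
    have hG : HasDerivAt G
        ((A * D * (E - F * t) - F * (B - D * t) * (A + B - D * t)) /
          (2 * Real.log 2 * ((B - D * t) * ((A + B - D * t) * (E - F * t))))) t := by
      have hsum := (((hlogu.div_const (Real.log 2)).const_mul (1/2)).add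
        ((hloge.div_const (Real.log 2)).const_mul (1/2)))
      have hGeq : G = fun s : ℝ =>
          (1/2) * (Real.log (1 + A / (B - D * s)) / Real.log 2) +
          (1/2) * (Real.log (E - F * s) / Real.log 2) := by
        funext s; simp [G, Real.logb]
      rw [hGeq]
      refine hsum.congr_deriv ?_
      have hw' : B - D * t + A ≠ 0 := by linarith
      have he' := he.ne'
      generalize E - F * t = q at he' ⊢
      field_simp
      ring
    rw [hG.deriv, div_eq_zero_iff]
    have hden : 2 * Real.log 2 * ((B - D * t) * ((A + B - D * t) * (E - F * t))) ≠ 0 := by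
      positivity
    simp only [hden, or_false]
    rw [sub_eq_zero]
  refine ⟨key, ?_⟩
  intro x hx y hy
  simp only [Set.mem_setOf_eq] at hx hy
  have hx' := (key x hx.1).mp hx.2
  have hy' := (key y hy.1).mp hy.2
  have h0 : (F * D * (2 * B - D * (x + y))) * (y - x) = 0 := by
    linear_combination hy' - hx'
  have hne : F * D * (2 * B - D * (x + y)) ≠ 0 := by
    have : 0 < 2 * B - D * (x + y) := by nlinarith [hx.1.2, hy.1.2]
    positivity
  have := (mul_eq_zero.mp h0).resolve_left hne
  linarith
end
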